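/- Fix q₀ ∈ U such that K(q₀) is invertible. Then the real directional derivative of the first component z¹ of z at q₀ along the radial vector q₀ itself vanishes, i.e. (fderiv ℝ z¹ q₀)(q₀) = 0, if and only if the determinant of the m×m matrix obtained from K(q₀) by replacing its first column with the vector h(z(q₀)) is zero. -/

import Mathlib

/-!
Put `ζ₀ = z q₀`, `w = Dz(q₀) q₀` and `G = F q₀`, so that `K(q₀)` is the complex Jacobian
of `G` at `ζ₀`. For real `t`, conjugation commutes with multiplication by `t`, so
`F (t • q) ζ = t • (F q ζ + h ζ) - h ζ`. Differentiating `F (t • q₀) (z (t • q₀)) = 0`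
at `t = 1` and using `G ζ₀ = 0` gives `K(q₀) w = -h(ζ₀)`. By Cramer's rule the determinant
of `K(q₀)` with its first column replaced by `h(ζ₀)` is `-det K(q₀) · w¹`, which vanishes
iff `w¹` does.
-/

open Matrix Filter Topology

namespace Matrix

variable {n α : Type*} [Fintype n] [DecidableEq n] [CommRing α]

theorem det_updateCol_mulVec (A : Matrix n n α) (w : n → α) (i : n) :
    (A.updateCol i (A *ᵥ w)).det = A.det * w i := by
  rw [← cramer_apply, cramer_eq_adjugate_mulVec, mulVec_mulVec, adjugate_mul, smul_mulVec,
    one_mulVec, Pi.smul_apply, smul_eq_mul]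

theorem det_updateCol_eq_zero_iff_of_mulVec_eq {A : Matrix n n α} (hA : IsUnit A.det)
    {w b : n → α} (hw : A *ᵥ w = b) (i : n) :
    (A.updateCol i b).det = 0 ↔ w i = 0 := by
  rw [← hw, det_updateCol_mulVec, hA.mul_right_eq_zero]

end Matrix

theorem mulVec_eq_fderiv_of_apply_eq_partial {𝕜 : Type*} [NontriviallyNormedField 𝕜]
    {ι κ : Type*} [Fintype ι] [DecidableEq ι] [Fintype κ]
    {G : (ι → 𝕜) → κ → 𝕜} {x : ι → 𝕜} (hG : DifferentiableAt 𝕜 G x)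
    {A : Matrix κ ι 𝕜}
    (hA : ∀ i j, A i j = fderiv 𝕜 (fun y => G y i) x (Pi.single j 1)) (v : ι → 𝕜) :
    A *ᵥ v = fderiv 𝕜 G x v := by
  have : A = LinearMap.toMatrix' (fderiv 𝕜 G x : (ι → 𝕜) →ₗ[𝕜] κ → 𝕜) := by
    ext i j
    rw [hA, fderiv_apply hG]
    rfl
  rw [this, LinearMap.toMatrix'_mulVec]
  rfl

theorem apply_fderiv_self_eq_neg_of_radial {E W Y : Type*}
    [NormedAddCommGroup E] [NormedSpace ℝ E] [NormedAddCommGroup W] [NormedSpace ℝ W]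
    [NormedAddCommGroup Y] [NormedSpace ℝ Y]
    {z : E → W} {G h : W → Y} {q₀ : E} {DG : W →L[ℝ] Y}
    (hz : DifferentiableAt ℝ z q₀) (hG : HasFDerivAt G DG (z q₀))
    (hh : DifferentiableAt ℝ h (z q₀)) (hG₀ : G (z q₀) = 0)
    (hradial : ∀ᶠ t : ℝ in 𝓝 1,
      t • (G (z (t • q₀)) + h (z (t • q₀))) - h (z (t • q₀)) = 0) :
    DG (fderiv ℝ z q₀ q₀) = -h (z q₀) := by
  set w := fderiv ℝ z q₀ q₀
  have hcurve : HasDerivAt (fun t : ℝ => z (t • q₀)) w 1 := by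
    have := hz.hasFDerivAt.comp_hasDerivAt_of_eq (1 : ℝ)
      ((hasDerivAt_id' (1 : ℝ)).smul_const q₀) (one_smul ℝ q₀).symm
    rwa [one_smul] at this
  have hG' : HasDerivAt (fun t : ℝ => G (z (t • q₀))) (DG w) 1 :=
    hG.comp_hasDerivAt_of_eq 1 hcurve (by simp)
  have hh' : HasDerivAt (fun t : ℝ => h (z (t • q₀))) (fderiv ℝ h (z q₀) w) 1 :=
    hh.hasFDerivAt.comp_hasDerivAt_of_eq 1 hcurve (by simp)
  have hderiv := ((hasDerivAt_id (1 : ℝ)).smul (hG'.add hh')).sub hh'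
  have hzero :=
    hderiv.unique ((hasDerivAt_const (1 : ℝ) (0 : Y)).congr_of_eventuallyEq hradial)
  simp only [id, one_smul, Pi.add_apply, hG₀, zero_add] at hzero
  rw [eq_neg_iff_add_eq_zero, ← hzero]
  abel

theorem conj_affine_real_smul {ι : Type*} [Fintype ι] (M : Matrix ι ι ℂ) (b q : ι → ℂ)
    (t : ℝ) :
    (fun i => (t • q) i - ∑ j, M i j * starRingEnd ℂ ((t • q) j) - b i) =
      t • ((fun i => q i - ∑ j, M i j * starRingEnd ℂ (q j) - b i) + b) - b := by
  ext i
  simp only [Pi.smul_apply, Pi.sub_apply, Pi.add_apply, Complex.real_smul, map_mul,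
    Complex.conj_ofReal, mul_left_comm _ (t : ℂ), ← Finset.mul_sum]
  ring

theorem radial_reduction_iff_det_vanishes
    /- Invariance of `z¹` along the radial direction `q₀` is equivalent to the
       vanishing of `det K(q₀)` with first column replaced by `h(z(q₀))`. -/
    (m : ℕ) (hm : 2 ≤ m)
    (V : Set (Fin m → ℂ)) (hV : IsOpen V)
    (M : (Fin m → ℂ) → Matrix (Fin m) (Fin m) ℂ)
    (hM : ∀ i j, DifferentiableOn ℂ (fun ζ => M ζ i j) V)
    (h : (Fin m → ℂ) → (Fin m → ℂ))
    (hh : ∀ i, DifferentiableOn ℂ (fun ζ => h ζ i) V)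
    (F : (Fin m → ℂ) → (Fin m → ℂ) → (Fin m → ℂ))
    (hF : ∀ q ζ, F q ζ =
      fun i => q i - (∑ j, M ζ i j * (starRingEnd ℂ) (q j)) - h ζ i)
    (U : Set (Fin m → ℂ)) (hU : IsOpen U)
    (z : (Fin m → ℂ) → (Fin m → ℂ))
    (hzV : ∀ q ∈ U, z q ∈ V)
    (hzF : ∀ q ∈ U, F q (z q) = 0)
    (hzdiff : DifferentiableOn ℝ z U)
    (K : (Fin m → ℂ) → Matrix (Fin m) (Fin m) ℂ)
    (hK : ∀ q ∈ U, ∀ i j, K q i j =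
      fderiv ℂ (fun ζ => F q ζ i) (z q) (Pi.single j 1))
    (q₀ : Fin m → ℂ) (hq₀ : q₀ ∈ U)
    (hKinv : IsUnit (K q₀).det) :
    fderiv ℝ (fun q => z q (⟨0, by omega⟩ : Fin m)) q₀ q₀ = 0 ↔
      (Matrix.updateCol (K q₀) (⟨0, by omega⟩ : Fin m) (h (z q₀))).det = 0 := by
  have hV₀ : V ∈ 𝓝 (z q₀) := hV.mem_nhds (hzV q₀ hq₀)
  have hz : DifferentiableAt ℝ z q₀ := hzdiff.differentiableAt (hU.mem_nhds hq₀)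
  have hhz : DifferentiableAt ℂ h (z q₀) :=
    differentiableAt_pi.2 fun i => (hh i).differentiableAt hV₀
  have hG : DifferentiableAt ℂ (F q₀) (z q₀) := by
    rw [funext (hF q₀)]
    refine differentiableAt_pi.2 fun i => ((differentiableAt_const _).sub ?_).sub
      ((hh i).differentiableAt hV₀)
    exact .fun_sum fun k _ => ((hM i k).differentiableAt hV₀).mul_const _
  have hradial : ∀ᶠ t : ℝ in 𝓝 1,
      t • (F q₀ (z (t • q₀)) + h (z (t • q₀))) - h (z (t • q₀)) = 0 := by
    have hU₁ : U ∈ 𝓝 ((1 : ℝ) • q₀) := by rw [one_smul]; exact hU.mem_nhds hq₀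
    filter_upwards [(continuous_id.smul continuous_const).continuousAt.preimage_mem_nhds hU₁]
      with t ht
    rw [hF, ← conj_affine_real_smul, ← hF]
    exact hzF _ ht
  have hKw : K q₀ *ᵥ -fderiv ℝ z q₀ q₀ = h (z q₀) := by
    rw [mulVec_eq_fderiv_of_apply_eq_partial hG (hK q₀ hq₀), map_neg, neg_eq_iff_eq_neg]
    exact apply_fderiv_self_eq_neg_of_radial hz (hG.hasFDerivAt.restrictScalars ℝ)
      (hhz.restrictScalars ℝ) (hzF q₀ hq₀) hradial
  rw [det_updateCol_eq_zero_iff_of_mulVec_eq hKinv hKw, Pi.neg_apply, neg_eq_zero,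
    fderiv_apply hz]
  rfl
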